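/- arXiv:2603.02064 — 4 statements merged into one kernel-verified Lean document; each statement's English description precedes it below -/
import Mathlib

section
/- Consider the smooth dynamics in ℝ^L (for L ≥ 2 scalar parameters w_1,...,w_L) given by dw_i/dt = -sign(∂_{w_i} f(∏_j w_j))·|∂_{w_i} f(∏_j w_j)|^{q-1} for a differentiable f : ℝ → ℝ and q ≥ 1. Along any absolutely continuous solution (away from points where some w_i = 0), for all i, j ∈ [L], the quantity |w_i(t)|^q - |w_j(t)|^q is constant in time. -/
/-!
Write `φ(y) = sign y * |y|^(q-1)`, so that the flow reads `ẇ_k = -φ(g_k)` with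
`g_k = (∏_{j ≠ k} w_j) f'(x)`, and `d/dt |w_k|^q = q φ(w_k) ẇ_k` away from `w_k = 0`.
Since `φ` is multiplicative and `w_k g_k = x f'(x)`, this rate equals `-q φ(x f'(x))` for every
`k`, so each difference `|w_i|^q - |w_j|^q` has zero derivative.
-/

open Finset

namespace Real

theorem sign_eq_coe_sign (x : ℝ) : sign x = (SignType.sign x : ℝ) := by
  rcases lt_trichotomy x 0 with hx | rfl | hx
  · simp [sign_of_neg hx, _root_.sign_neg hx]
  · simp [sign_zero]
  · simp [sign_of_pos hx, _root_.sign_pos hx]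

theorem sign_mul (a b : ℝ) : sign (a * b) = sign a * sign b := by
  simp only [sign_eq_coe_sign, _root_.sign_mul, SignType.coe_mul]

theorem sign_mul_abs_rpow_mul (r a b : ℝ) :
    sign (a * b) * |a * b| ^ r = sign a * |a| ^ r * (sign b * |b| ^ r) := by
  rw [sign_mul, abs_mul, mul_rpow (abs_nonneg a) (abs_nonneg b)]
  ring

end Real

theorem HasDerivAt.abs_rpow {x : ℝ → ℝ} {x' t : ℝ} (hx : HasDerivAt x x' t) (h0 : x t ≠ 0)
    (q : ℝ) :
    HasDerivAt (fun s => |x s| ^ q) (q * (Real.sign (x t) * |x t| ^ (q - 1)) * x') t := by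
  refine (((hasDerivAt_abs h0).comp t hx).rpow_const (Or.inl (abs_ne_zero.mpr h0))).congr_deriv
    ?_
  rw [Real.sign_eq_coe_sign, Function.comp_apply]
  ring

theorem hasDerivAt_abs_rpow_of_steepest_flow {ι : Type*} [Fintype ι] [DecidableEq ι]
    (q : ℝ) (g : ℝ → ℝ) (w : ℝ → ι → ℝ) {t : ℝ} {k : ι} (hwk : w t k ≠ 0)
    (hk : HasDerivAt (fun s => w s k)
      (- Real.sign ((∏ j ∈ univ.erase k, w t j) * g (∏ j, w t j))
        * |(∏ j ∈ univ.erase k, w t j) * g (∏ j, w t j)| ^ (q - 1)) t) :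
    HasDerivAt (fun s => |w s k| ^ q)
      (-(q * (Real.sign ((∏ j, w t j) * g (∏ j, w t j))
        * |(∏ j, w t j) * g (∏ j, w t j)| ^ (q - 1)))) t := by
  have hprod : w t k * ((∏ j ∈ univ.erase k, w t j) * g (∏ j, w t j))
      = (∏ j, w t j) * g (∏ j, w t j) := by
    rw [← mul_assoc, mul_prod_erase univ (w t) (mem_univ k)]
  convert hk.abs_rpow hwk q using 1
  rw [← hprod, Real.sign_mul_abs_rpow_mul]
  ring

theorem steepest_flow_balance_invariant_general
    (L : ℕ) (q : ℝ)
    (f : ℝ → ℝ)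
    (w : ℝ → Fin L → ℝ)
    (hw : ∀ t i, w t i ≠ 0)
    (hdyn : ∀ t (i : Fin L), HasDerivAt (fun s => w s i)
      (- Real.sign ((∏ j ∈ univ.erase i, w t j) * deriv f (∏ j, w t j))
        * |(∏ j ∈ univ.erase i, w t j) * deriv f (∏ j, w t j)| ^ (q - 1)) t) :
    ∀ t (i j : Fin L), |w t i| ^ q - |w t j| ^ q = |w 0 i| ^ q - |w 0 j| ^ q := by
  intro t i j
  have hbalance : ∀ s, HasDerivAt (fun u => |w u i| ^ q - |w u j| ^ q) 0 s := fun s =>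
    ((hasDerivAt_abs_rpow_of_steepest_flow q (deriv f) w (hw s i) (hdyn s i)).sub
      (hasDerivAt_abs_rpow_of_steepest_flow q (deriv f) w (hw s j) (hdyn s j))).congr_deriv
        (sub_self _)
  exact is_const_of_deriv_eq_zero (fun s => (hbalance s).differentiableAt)
    (fun s => (hbalance s).deriv) t 0

/-- For the deep diagonal reparameterization `x = ∏ i, w i` trained with the
`L_p` steepest flow (exponent `q`, `1/p + 1/q = 1`), the quantities
`|w_i(t)|^q - |w_j(t)|^q` are conserved along any solution avoiding zeros. -/
theorem steepest_flow_balance_invariant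
    (L : ℕ) (hL : 2 ≤ L) (q : ℝ) (hq : 1 ≤ q)
    (f : ℝ → ℝ) (hf : Differentiable ℝ f)
    (w : ℝ → Fin L → ℝ)
    (hw : ∀ t i, w t i ≠ 0)
    (hdyn : ∀ t (i : Fin L), HasDerivAt (fun s => w s i)
      (- Real.sign ((∏ j ∈ univ.erase i, w t j) * deriv f (∏ j, w t j))
        * |(∏ j ∈ univ.erase i, w t j) * deriv f (∏ j, w t j)| ^ (q - 1)) t) :
    ∀ t (i j : Fin L), |w t i| ^ q - |w t j| ^ q = |w 0 i| ^ q - |w 0 j| ^ q :=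
  steepest_flow_balance_invariant_general L q f w hw hdyn
end

section
/- Consider the dynamics dw_i/dt = -sign(∂_{w_i} F(w))·|∂_{w_i} F(w)|^{q-1} - α(t)·w_i where F(w) = f(∏_{j=1}^L w_j) and α : [0,∞) → ℝ is continuous. Then along any smooth solution (away from zeros of the w_i), for all i, j ∈ [L]: |w_i(t)|^q - |w_j(t)|^q = (|w_i(0)|^q - |w_j(0)|^q)·exp(-q·∫_0^t α(s) ds). -/
/-!
Write `x = ∏ j, w j` and `g_i = ∂_{w_i} F = (∏_{j ≠ i} w_j) f'(x)`, so that `w_i g_i = x f'(x)`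
is the same for every coordinate. Since `d|u|^q/dt = q sign(u) |u|^(q-1) u'`, the descent term
contributes `-q sign(w_i g_i) |w_i g_i|^(q-1)` to `d|w_i|^q/dt`, again independent of `i`, and the
weight decay contributes `-q α |w_i|^q`. Hence `|w_i|^q - |w_j|^q` solves the scalar linear ODE
`D' = -q α D`, whose solutions are `D(0) exp(-q ∫_0^t α)`.
-/

open Finset

theorem Real.sign_eq_coe_sign_s2 (x : ℝ) : Real.sign x = (SignType.sign x : ℝ) := by
  rcases lt_trichotomy x 0 with hx | rfl | hx <;> simp [Real.sign_of_neg, Real.sign_of_pos, *]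

theorem HasDerivAt.abs_rpow_s2 {u : ℝ → ℝ} {u' t : ℝ} (q : ℝ) (hu : HasDerivAt u u' t)
    (hut : u t ≠ 0) :
    HasDerivAt (fun s => |u s| ^ q) (q * SignType.sign (u t) * |u t| ^ (q - 1) * u') t := by
  have h := ((hasDerivAt_abs hut).comp t hu).rpow_const (p := q) (Or.inl (abs_ne_zero.2 hut))
  exact h.congr_deriv (by simp only [Function.comp_apply]; ring)

theorem HasDerivAt.abs_rpow_of_steepest_decay {u : ℝ → ℝ} {t g a q : ℝ}
    (hu : HasDerivAt u (-Real.sign g * |g| ^ (q - 1) - a * u t) t) (hut : u t ≠ 0) :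
    HasDerivAt (fun s => |u s| ^ q)
      (-q * Real.sign (u t * g) * |u t * g| ^ (q - 1) - q * a * |u t| ^ q) t := by
  have hdescent : SignType.sign (u t) * |u t| ^ (q - 1) * (SignType.sign g * |g| ^ (q - 1))
      = SignType.sign (u t * g) * |u t * g| ^ (q - 1) := by
    rw [sign_mul, abs_mul, Real.mul_rpow (abs_nonneg _) (abs_nonneg _), SignType.coe_mul]
    ring
  have hdecay : SignType.sign (u t) * |u t| ^ (q - 1) * u t = |u t| ^ q := by
    rw [mul_right_comm, sign_mul_self, mul_comm, ← Real.rpow_add_one (abs_ne_zero.2 hut),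
      sub_add_cancel]
  rw [Real.sign_eq_coe_sign_s2] at hu ⊢
  exact (hu.abs_rpow_s2 q hut).congr_deriv (by linear_combination -q * hdescent - q * a * hdecay)

theorem eq_mul_exp_of_hasDerivAt_eq_mul {D K k : ℝ → ℝ} (hD : ∀ s, HasDerivAt D (k s * D s) s)
    (hK : ∀ s, HasDerivAt K (k s) s) (t : ℝ) : D t = D 0 * Real.exp (K t - K 0) := by
  have hE : ∀ s, HasDerivAt (fun s => D s * Real.exp (-K s)) 0 s := fun s =>
    ((hD s).mul (hK s).neg.exp).congr_deriv (by ring)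
  have hconst : D t * Real.exp (-K t) = D 0 * Real.exp (-K 0) :=
    is_const_of_deriv_eq_zero (fun s => (hE s).differentiableAt) (fun s => (hE s).deriv) t 0
  rw [sub_eq_add_neg, Real.exp_add, ← mul_assoc, mul_right_comm, ← hconst, mul_assoc,
    ← Real.exp_add, neg_add_cancel, Real.exp_zero, mul_one]

theorem steepest_flow_weight_decay_balance_general
    (L : ℕ) (q : ℝ)
    (f : ℝ → ℝ)
    (α : ℝ → ℝ) (hα : Continuous α)
    (w : ℝ → Fin L → ℝ)
    (hw : ∀ t i, w t i ≠ 0)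
    (hdyn : ∀ t (i : Fin L), HasDerivAt (fun s => w s i)
      (- Real.sign ((∏ j ∈ univ.erase i, w t j) * deriv f (∏ j, w t j))
          * |(∏ j ∈ univ.erase i, w t j) * deriv f (∏ j, w t j)| ^ (q - 1)
        - α t * w t i) t) :
    ∀ t, 0 ≤ t → ∀ i j : Fin L,
      |w t i| ^ q - |w t j| ^ q
        = (|w 0 i| ^ q - |w 0 j| ^ q) * Real.exp (-q * ∫ s in (0:ℝ)..t, α s) := by
  intro t _ i j
  have hprod : ∀ s k, w s k * ((∏ j ∈ univ.erase k, w s j) * deriv f (∏ j, w s j))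
      = (∏ j, w s j) * deriv f (∏ j, w s j) := fun s k => by
    rw [← mul_assoc, mul_prod_erase _ _ (mem_univ k)]
  have hcoord := fun s k => (hdyn s k).abs_rpow_of_steepest_decay (hw s k)
  have hdiff : ∀ s, HasDerivAt (fun s => |w s i| ^ q - |w s j| ^ q)
      (-q * α s * (|w s i| ^ q - |w s j| ^ q)) s := fun s => by
    have h := (hcoord s i).sub (hcoord s j)
    rw [hprod, hprod] at h
    exact h.congr_deriv (by ring)
  have hint : ∀ s, HasDerivAt (fun s => -q * ∫ u in (0:ℝ)..s, α u) (-q * α s) s := fun s =>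
    (intervalIntegral.integral_hasDerivAt_right (hα.intervalIntegrable _ _)
      (hα.stronglyMeasurableAtFilter _ _) hα.continuousAt).const_mul (-q)
  simpa using eq_mul_exp_of_hasDerivAt_eq_mul hdiff hint t

/-- Balance equations for `L_p` steepest descent with decoupled weight decay
`α(t)` on the deep diagonal reparameterization `x = ∏ i, w i`:
`|w_i(t)|^q - |w_j(t)|^q = (|w_i(0)|^q - |w_j(0)|^q) · exp(-q ∫_0^t α)`. -/
theorem steepest_flow_weight_decay_balance
    (L : ℕ) (hL : 2 ≤ L) (q : ℝ) (hq : 1 ≤ q)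
    (f : ℝ → ℝ) (hf : Differentiable ℝ f)
    (α : ℝ → ℝ) (hα : Continuous α)
    (w : ℝ → Fin L → ℝ)
    (hw : ∀ t i, w t i ≠ 0)
    (hdyn : ∀ t (i : Fin L), HasDerivAt (fun s => w s i)
      (- Real.sign ((∏ j ∈ univ.erase i, w t j) * deriv f (∏ j, w t j))
          * |(∏ j ∈ univ.erase i, w t j) * deriv f (∏ j, w t j)| ^ (q - 1)
        - α t * w t i) t) :
    ∀ t, 0 ≤ t → ∀ i j : Fin L,
      |w t i| ^ q - |w t j| ^ q
        = (|w 0 i| ^ q - |w 0 j| ^ q) * Real.exp (-q * ∫ s in (0:ℝ)..t, α s) :=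
  steepest_flow_weight_decay_balance_general L q f α hα w hw hdyn
end

section
/- Let f : ℝ^n → ℝ be twice continuously differentiable with ∇f(0) ≠ 0, and let L ≥ 3. Define F : (ℝ^n)^L → ℝ by F(w_1,...,w_L) = f(w_1 ⊙ w_2 ⊙ ⋯ ⊙ w_L) (entrywise product). Then every point (w_1,...,w_L) with exactly two of the vectors w_i, w_j equal to zero (i ≠ j) and all other w_k nonzero is a critical point of F at which the Hessian of F is not positive semidefinite; i.e., it is a saddle point. -/
open Finset

/-!
Each term of the Leibniz expansion of the derivative of `w ↦ w₁ ⊙ ⋯ ⊙ w_L` at `p` keeps one of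
the two vanishing factors, so `p` is critical. Along the line `p + s • v` with
`v_i = u / ∏_{k ≠ i, j} p_k`, `v_j = 1` and all other `v_k = 0`, the product is exactly `s² • u`;
hence the Hessian of `F` in direction `v` is `2 f'(0) u`, which is negative for a suitable `u`
since `f'(0) ≠ 0`.
-/

section LineRestriction

variable {𝕜 : Type*} [NontriviallyNormedField 𝕜] {E F : Type*}
  [NormedAddCommGroup E] [NormedSpace 𝕜 E] [NormedAddCommGroup F] [NormedSpace 𝕜 F]

theorem iteratedFDeriv_apply_const_eq_iteratedDeriv_line {m : ℕ} {G : E → F}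
    (hG : ContDiff 𝕜 m G) (p v : E) :
    iteratedFDeriv 𝕜 m G p (fun _ => v) = iteratedDeriv m (fun s : 𝕜 => G (p + s • v)) 0 := by
  have hline : (fun s : 𝕜 => G (p + s • v)) =
      (fun x => G (p + x)) ∘ ContinuousLinearMap.smulRight (1 : 𝕜 →L[𝕜] 𝕜) v := by
    funext s; simp
  have hshift : ContDiff 𝕜 m fun x => G (p + x) := hG.comp (contDiff_const.add contDiff_id)
  rw [iteratedDeriv_eq_iteratedFDeriv, hline,
    ContinuousLinearMap.iteratedFDeriv_comp_right _ hshift _ le_rfl, iteratedFDeriv_comp_add_left]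
  simp

theorem iteratedDeriv_two_comp_sq_smul {f : E → F} (hf : ContDiff 𝕜 2 f) (u : E) :
    iteratedDeriv 2 (fun s : 𝕜 => f (s ^ 2 • u)) 0 = (2 : 𝕜) • fderiv 𝕜 f 0 u := by
  have hf' : Differentiable 𝕜 (fderiv 𝕜 f) :=
    (hf.fderiv_right le_rfl).differentiable one_ne_zero
  have hcurve : ∀ s : 𝕜, HasDerivAt (fun s : 𝕜 => s ^ 2 • u) ((2 * s) • u) s := fun s => by
    simpa [mul_comm] using (hasDerivAt_pow 2 s).smul_const u
  have hderiv : deriv (fun s : 𝕜 => f (s ^ 2 • u)) =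
      fun s => (2 * s) • fderiv 𝕜 f (s ^ 2 • u) u := by
    funext s
    have := ((hf.differentiable two_ne_zero) _).hasFDerivAt.comp_hasDerivAt s (hcurve s)
    simpa [Function.comp_def] using this.deriv
  have hslope : HasDerivAt (fun s : 𝕜 => fderiv 𝕜 f (s ^ 2 • u) u)
      (deriv (fun s : 𝕜 => fderiv 𝕜 f (s ^ 2 • u) u) 0) 0 :=
    ((hf' _).comp 0 (hcurve 0).differentiableAt |>.clm_apply (differentiableAt_const u)).hasDerivAt
  have := ((hasDerivAt_id (0 : 𝕜)).const_mul 2).fun_smul hslope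
  rw [iteratedDeriv_succ, iteratedDeriv_one, hderiv]
  simpa using this.deriv

end LineRestriction

def entrywiseProd {ι σ R : Type*} [Fintype ι] [CommMonoid R] (w : ι → σ → R) : σ → R :=
  fun c => ∏ k, w k c

section EntrywiseProd

variable {𝕜 ι σ : Type*} [Fintype ι]

theorem prod_eq_mul_mul_prod_erase_erase [DecidableEq ι] {R : Type*} [CommMonoid R] {i j : ι}
    (hij : i ≠ j) (x : ι → R) : ∏ k, x k = x i * (x j * ∏ k ∈ (univ.erase i).erase j, x k) := by
  rw [mul_prod_erase _ _ (mem_erase.mpr ⟨hij.symm, mem_univ j⟩), mul_prod_erase _ _ (mem_univ i)]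

theorem exists_entrywiseProd_add_smul_eq_sq_smul [Field 𝕜] {p : ι → σ → 𝕜} {i j : ι}
    (hij : i ≠ j) (hpi : p i = 0) (hpj : p j = 0) (hother : ∀ k, k ≠ i → k ≠ j → ∀ c, p k c ≠ 0)
    (u : σ → 𝕜) : ∃ v : ι → σ → 𝕜, ∀ s : 𝕜, entrywiseProd (p + s • v) = s ^ 2 • u := by
  classical
  set P : σ → 𝕜 := fun c => ∏ k ∈ (univ.erase i).erase j, p k c
  have hP : ∀ c, P c ≠ 0 := fun c => prod_ne_zero_iff.mpr fun k hk =>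
    hother k (ne_of_mem_erase (mem_of_mem_erase hk)) (ne_of_mem_erase hk) c
  set v : ι → σ → 𝕜 := Pi.single i (u / P) + Pi.single j 1
  refine ⟨v, fun s => funext fun c => ?_⟩
  have hrest : ∏ k ∈ (univ.erase i).erase j, (p + s • v) k c = P c := by
    refine prod_congr rfl fun k hk => ?_
    simp [v, ne_of_mem_erase (mem_of_mem_erase hk), ne_of_mem_erase hk]
  have hvi : (p + s • v) i c = s * (u c / P c) := by simp [v, hpi, hij]
  have hvj : (p + s • v) j c = s := by simp [v, hpj, hij.symm]
  rw [entrywiseProd, prod_eq_mul_mul_prod_erase_erase hij, hrest, hvi, hvj, Pi.smul_apply,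
    smul_eq_mul]
  field_simp [hP c]

variable [NontriviallyNormedField 𝕜] [Fintype σ]

theorem contDiff_entrywiseProd {n : WithTop ℕ∞} :
    ContDiff 𝕜 n (entrywiseProd : (ι → σ → 𝕜) → σ → 𝕜) :=
  contDiff_pi.mpr fun c => contDiff_prod fun k _ => contDiff_apply_apply _ _ k c

theorem hasFDerivAt_entrywiseProd_of_two_eq_zero [DecidableEq ι] {p : ι → σ → 𝕜} {i j : ι}
    (hij : i ≠ j) (hpi : p i = 0) (hpj : p j = 0) : HasFDerivAt (𝕜 := 𝕜) entrywiseProd 0 p := by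
  refine hasFDerivAt_pi'' fun c => ?_
  have hcoord := HasFDerivAt.finsetProd (u := univ) (x := p) (g := fun k (w : ι → σ → 𝕜) => w k c)
    fun k _ => ((hasFDerivAt_apply (𝕜 := 𝕜) c (p k)).comp p (hasFDerivAt_apply (𝕜 := 𝕜) k p) :)
  have hvanish : ∀ k, ∏ l ∈ univ.erase k, p l c = 0 := fun k => by
    obtain ⟨l, hlk, hl⟩ : ∃ l ∈ univ.erase k, p l = 0 := by
      by_cases hk : k = i
      · exact ⟨j, mem_erase.mpr ⟨fun h => hij (hk ▸ h.symm), mem_univ j⟩, hpj⟩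
      · exact ⟨i, mem_erase.mpr ⟨Ne.symm hk, mem_univ i⟩, hpi⟩
    exact prod_eq_zero hlk (congrFun hl c)
  exact hcoord.congr_fderiv (by ext; simp [hvanish])

end EntrywiseProd

theorem ContinuousLinearMap.exists_apply_neg {E : Type*} [NormedAddCommGroup E] [NormedSpace ℝ E]
    {ℓ : E →L[ℝ] ℝ} (hℓ : ℓ ≠ 0) : ∃ u, ℓ u < 0 := by
  obtain ⟨u, hu⟩ := DFunLike.ne_iff.mp hℓ
  exact ⟨-(ℓ u) • u, by simpa using hu⟩

theorem deep_diagonal_saddle_points_general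
    (n L : ℕ)
    (f : (Fin n → ℝ) → ℝ) (hf : ContDiff ℝ 2 f)
    (hf0 : fderiv ℝ f 0 ≠ 0)
    (F : (Fin L → Fin n → ℝ) → ℝ)
    (hF : ∀ w, F w = f (fun c => ∏ i, w i c))
    (p : Fin L → Fin n → ℝ) (i j : Fin L) (hij : i ≠ j)
    (hpi : p i = 0) (hpj : p j = 0)
    (hother : ∀ k, k ≠ i → k ≠ j → ∀ c, p k c ≠ 0) :
    fderiv ℝ F p = 0 ∧ ∃ v, iteratedFDeriv ℝ 2 F p ![v, v] < 0 := by
  have hFf : F = f ∘ entrywiseProd := funext hF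
  subst hFf
  obtain ⟨u, hu⟩ := ContinuousLinearMap.exists_apply_neg hf0
  obtain ⟨v, hv⟩ := exists_entrywiseProd_add_smul_eq_sq_smul hij hpi hpj hother u
  refine ⟨((hf.differentiable two_ne_zero _).hasFDerivAt.comp p
    (hasFDerivAt_entrywiseProd_of_two_eq_zero hij hpi hpj)).fderiv.trans (by simp), v, ?_⟩
  have hvv : ![v, v] = fun _ => v := by ext k; fin_cases k <;> rfl
  rw [hvv, iteratedFDeriv_apply_const_eq_iteratedDeriv_line (hf.comp contDiff_entrywiseProd)]
  simp only [Function.comp_apply, hv, iteratedDeriv_two_comp_sq_smul hf, smul_eq_mul]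
  linarith

/-- Saddle points of deep diagonal reparameterizations: if `∇f(0) ≠ 0`, `L ≥ 3`,
and exactly two of the factors `w i, w j` vanish (entrywise) while all other
factors are entrywise nonzero, then `F(w) = f(w_1 ⊙ ⋯ ⊙ w_L)` has a critical
point there whose Hessian is not positive semidefinite. -/
theorem deep_diagonal_saddle_points
    (n L : ℕ) (hL : 3 ≤ L)
    (f : (Fin n → ℝ) → ℝ) (hf : ContDiff ℝ 2 f)
    (hf0 : fderiv ℝ f 0 ≠ 0)
    (F : (Fin L → Fin n → ℝ) → ℝ)
    (hF : ∀ w, F w = f (fun c => ∏ i, w i c))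
    (p : Fin L → Fin n → ℝ) (i j : Fin L) (hij : i ≠ j)
    (hpi : p i = 0) (hpj : p j = 0)
    (hother : ∀ k, k ≠ i → k ≠ j → ∀ c, p k c ≠ 0) :
    fderiv ℝ F p = 0 ∧ ∃ v, iteratedFDeriv ℝ 2 F p ![v, v] < 0 :=
  deep_diagonal_saddle_points_general n L f hf hf0 F hF p i j hij hpi hpj hother
end

section
/- Let R : ℝ^n → ℝ be C² with ∇²R(x)^{-1} existing and satisfying v^T ∇²R(x)^{-1} v ≥ μ‖v‖₂² for all x, v (inverse μ-coercivity), and suppose R is separable so that ∇²R(x)^{-1} is diagonal with entries ≥ μ. Let f be C¹ and let x_t solve d/dt ∇R(x_t) = -sign(∇f(x_t))⊙|∇f(x_t)|^{q-1} with q ∈ [1,2]. Then d/dt f(x_t) ≤ -μ·‖∇f(x_t)‖_q^q ≤ 0; in particular f(x_t) is nonincreasing. -/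
/-!
Along the flow, `d/dt f(x_t) = ⟪∇f(x_t), ẋ_t⟫ = -∑ᵢ dᵢ gᵢ sign(gᵢ) |gᵢ|^{q-1} = -∑ᵢ dᵢ |gᵢ|^q`
with `g = ∇f(x_t)`; the bound `dᵢ ≥ μ` turns this into `≤ -μ ‖g‖_q^q ≤ 0`, and a function with
nonpositive derivative is antitone.
-/

theorem Real.mul_sign_mul_abs_rpow_sub_one {q : ℝ} (hq : q ≠ 0) (a : ℝ) :
    a * (Real.sign a * |a| ^ (q - 1)) = |a| ^ q := by
  rcases eq_or_ne a 0 with rfl | ha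
  · simp [Real.zero_rpow hq]
  · have hsign : a * Real.sign a = |a| := by
      rcases ha.lt_or_gt with h | h
      · rw [Real.sign_of_neg h, abs_of_neg h]; ring
      · rw [Real.sign_of_pos h, abs_of_pos h]; ring
    rw [← mul_assoc, hsign, Real.rpow_sub (abs_pos.2 ha), Real.rpow_one]
    field_simp

theorem EuclideanSpace.hasDerivAt_of_forall_apply {ι : Type*} [Fintype ι]
    {x : ℝ → EuclideanSpace ℝ ι} {v : EuclideanSpace ℝ ι} {t : ℝ}
    (hx : ∀ i, HasDerivAt (fun s => x s i) (v i) t) : HasDerivAt x v t :=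
  (PiLp.continuousLinearEquiv 2 ℝ (fun _ : ι => ℝ)).symm.hasFDerivAt.comp_hasDerivAt t
    (hasDerivAt_pi.2 hx)

theorem HasGradientAt.comp_hasDerivAt_euclideanSpace {ι : Type*} [Fintype ι]
    {f : EuclideanSpace ℝ ι → ℝ} {g : EuclideanSpace ℝ ι}
    {x : ℝ → EuclideanSpace ℝ ι} {v : EuclideanSpace ℝ ι} {t : ℝ}
    (hf : HasGradientAt f g (x t)) (hx : HasDerivAt x v t) :
    HasDerivAt (fun s => f (x s)) (∑ i, g i * v i) t := by
  refine (hf.hasFDerivAt.comp_hasDerivAt t hx).congr_deriv ?_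
  simp only [InnerProductSpace.toDual_apply_apply, PiLp.inner_apply, RCLike.inner_apply,
    conj_trivial, mul_comm]

theorem hasDerivAt_comp_of_diagonal_steepest_flow {ι : Type*} [Fintype ι] {q : ℝ} (hq : q ≠ 0)
    {f : EuclideanSpace ℝ ι → ℝ} {d : ι → ℝ} {x : ℝ → EuclideanSpace ℝ ι} {t : ℝ}
    (hf : DifferentiableAt ℝ f (x t))
    (hx : ∀ i, HasDerivAt (fun s => x s i)
      (-(d i * (Real.sign (gradient f (x t) i) * |gradient f (x t) i| ^ (q - 1)))) t) :
    HasDerivAt (fun s => f (x s)) (-∑ i, d i * |gradient f (x t) i| ^ q) t := by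
  refine (hf.hasGradientAt.comp_hasDerivAt_euclideanSpace
    (EuclideanSpace.hasDerivAt_of_forall_apply (v := WithLp.toLp 2 _) hx)).congr_deriv ?_
  rw [← Finset.sum_neg_distrib]
  refine Finset.sum_congr rfl fun i _ => ?_
  rw [← Real.mul_sign_mul_abs_rpow_sub_one hq (gradient f (x t) i)]
  ring

theorem steepest_mirror_flow_descent_general
    (n : ℕ) (μ : ℝ) (hμ : 0 < μ) (q : ℝ) (hq1 : 1 ≤ q)
    (f : EuclideanSpace ℝ (Fin n) → ℝ)
    (hf : ContDiff ℝ 1 f)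
    (d : EuclideanSpace ℝ (Fin n) → Fin n → ℝ)
    (hcoer : ∀ y i, μ ≤ d y i)
    (x : ℝ → EuclideanSpace ℝ (Fin n))
    (hdyn : ∀ t (i : Fin n), HasDerivAt (fun s => x s i)
      (-(d (x t) i * (Real.sign (gradient f (x t) i)
          * |gradient f (x t) i| ^ (q - 1)))) t) :
    (∀ t : ℝ, deriv (fun s => f (x s)) t ≤ -μ * ∑ i, |gradient f (x t) i| ^ q) ∧
    (∀ t : ℝ, -μ * ∑ i, |gradient f (x t) i| ^ q ≤ 0) ∧
    Antitone (fun t => f (x t)) := by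
  have hflow (t : ℝ) := hasDerivAt_comp_of_diagonal_steepest_flow (zero_lt_one.trans_le hq1).ne'
    (hf.differentiable one_ne_zero (x t)) (hdyn t)
  have hrate (t : ℝ) : deriv (fun s => f (x s)) t ≤ -μ * ∑ i, |gradient f (x t) i| ^ q := by
    rw [(hflow t).deriv, neg_mul, neg_le_neg_iff, Finset.mul_sum]
    exact Finset.sum_le_sum fun i _ => by gcongr; exact hcoer _ i
  have hnonpos (t : ℝ) : -μ * ∑ i, |gradient f (x t) i| ^ q ≤ 0 := by
    rw [neg_mul, neg_nonpos]; positivity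
  exact ⟨hrate, hnonpos, antitone_of_deriv_nonpos (fun t => (hflow t).differentiableAt)
    fun t => (hrate t).trans (hnonpos t)⟩

/-- Descent along a separable, inversely `μ`-coercive steepest mirror flow:
if `∇²R` is diagonal with diagonal inverse entries `d ≥ μ` and `x_t` solves
`dx_i/dt = -d_i·sign(∂_i f)·|∂_i f|^{q-1}` (equivalently
`d/dt ∇R(x_t) = -sign(∇f)⊙|∇f|^{q-1}`), then
`d/dt f(x_t) ≤ -μ‖∇f(x_t)‖_q^q ≤ 0` and `f(x_t)` is nonincreasing. -/
theorem steepest_mirror_flow_descent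
    (n : ℕ) (μ : ℝ) (hμ : 0 < μ) (q : ℝ) (hq1 : 1 ≤ q) (hq2 : q ≤ 2)
    (R f : EuclideanSpace ℝ (Fin n) → ℝ)
    (hR : ContDiff ℝ 2 R) (hf : ContDiff ℝ 1 f)
    (d : EuclideanSpace ℝ (Fin n) → Fin n → ℝ)
    (hdiag : ∀ y (i j : Fin n), i ≠ j →
      iteratedFDeriv ℝ 2 R y ![EuclideanSpace.single i 1, EuclideanSpace.single j 1] = 0)
    (hinv : ∀ y (i : Fin n),
      iteratedFDeriv ℝ 2 R y ![EuclideanSpace.single i 1, EuclideanSpace.single i 1]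
        * d y i = 1)
    (hcoer : ∀ y i, μ ≤ d y i)
    (x : ℝ → EuclideanSpace ℝ (Fin n))
    (hdyn : ∀ t (i : Fin n), HasDerivAt (fun s => x s i)
      (-(d (x t) i * (Real.sign (gradient f (x t) i)
          * |gradient f (x t) i| ^ (q - 1)))) t) :
    (∀ t : ℝ, deriv (fun s => f (x s)) t ≤ -μ * ∑ i, |gradient f (x t) i| ^ q) ∧
    (∀ t : ℝ, -μ * ∑ i, |gradient f (x t) i| ^ q ≤ 0) ∧
    Antitone (fun t => f (x t)) :=
  steepest_mirror_flow_descent_general n μ hμ q hq1 f hf d hcoer x hdyn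
end
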